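/- arXiv:2509.11806 — 3 statements merged into one kernel-verified Lean document; each statement's English description precedes it below -/
import Mathlib

section
/- Let (G, ν) be a computably enumerable numbered group such that G is amenable. If for some integer n ≥ 3 there exists a computable function which, given any two-element set D ⊆ ℕ, produces a finite set F ⊆ ℕ such that ν(F) is a (1/n)-Følner set with respect to ν(D) and |F| = |ν(F)|, then (G, ν) is computable, i.e., the set {(i,j) : ν(i) = ν(j)} is decidable. -/
/-!
If `ν i ≠ ν j`, the Følner set `S = ν(f {i, j})` satisfies
`|S \ ν(i) S| + |S \ ν(j) S| ≤ 2|S|/n < |S|`, so some element of `S` lies in both `ν(i) S` and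
`ν(j) S`: `ν(i) ν(x) = ν(j) ν(y)` with `x ≠ y` in `f {i, j}`. Conversely such `x ≠ y` force
`ν i ≠ ν j`, because `ν` is injective on `f {i, j}`. Searching for such a witness while enumerating
the equality relation shows that inequality is c.e. too, and Post's theorem makes equality
decidable.
-/

/-- `F` is a `(1/n)`-Følner set with respect to `D`:
`F` is nonempty and `|F \ xF| ≤ |F|/n` for every `x ∈ D`. -/
def IsFolner {G : Type} [Group G] [DecidableEq G] (n : ℕ) (D F : Finset G) : Prop :=
  F.Nonempty ∧ ∀ x ∈ D, n * (F \ F.image (x * ·)).card ≤ F.card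

open Encodable Denumerable Nat.Partrec

theorem Denumerable.raise'_eq_foldl (l acc : List ℕ) (n : ℕ) :
    (l.foldl (fun p m => ((m + p.2) :: p.1, m + p.2 + 1)) (acc, n)).1
      = (raise' l n).reverse ++ acc := by
  induction l generalizing acc n with
  | nil => simp [raise']
  | cons m l ih => simp [raise', ih]

open Primrec in
theorem Primrec.raise' : Primrec₂ raise' := by
  have hstep : Primrec₂ fun (_ : List ℕ × ℕ) (p : (List ℕ × ℕ) × ℕ) =>
      (((p.2 + p.1.2) :: p.1.1, p.2 + p.1.2 + 1) : List ℕ × ℕ) := by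
    have hsum : Primrec fun q : (List ℕ × ℕ) × ((List ℕ × ℕ) × ℕ) => q.2.2 + q.2.1.2 :=
      nat_add.comp (snd.comp snd) (snd.comp (fst.comp snd))
    exact pair (list_cons.comp hsum (fst.comp (fst.comp snd))) (succ.comp hsum)
  refine (list_reverse.comp (fst.comp (list_foldl fst (pair (const []) snd) hstep))).to₂.of_eq
    fun l n => ?_
  simp [Denumerable.raise'_eq_foldl]

theorem Denumerable.sort_ofNat_finset (k : ℕ) :
    (ofNat (Finset ℕ) k).sort = raise' (ofNat (List ℕ) k) 0 := by
  refine (Finset.sortedLT_sort _).eq_of_mem_iff (raise'_sorted _ _) fun x => ?_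
  rw [Finset.mem_sort]
  show x ∈ Finset.map _ _ ↔ _
  simp only [eqv, Equiv.symm_mk, raise'Finset, Finset.mem_map_equiv, Equiv.coe_fn_mk, encode_nat]
  exact Iff.rfl

theorem Primrec.nat_finset_sort : Primrec fun s : Finset ℕ => s.sort :=
  Primrec.ofNat_iff.2 <| (Primrec.raise'.comp (Primrec.ofNat _) (Primrec.const 0)).of_eq
    fun k => (Denumerable.sort_ofNat_finset k).symm

theorem PrimrecRel.list_mem {α : Type*} [Primcodable α] :
    PrimrecRel fun (x : α) (l : List α) => x ∈ l :=
  ((PrimrecRel.exists_mem_list Primrec.eq).comp₂ Primrec₂.right Primrec₂.left).of_eq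
    fun x l => by simp

theorem PrimrecRel.nat_finset_mem : PrimrecRel fun (x : ℕ) (s : Finset ℕ) => x ∈ s :=
  (PrimrecRel.list_mem.comp₂ Primrec₂.left (Primrec.nat_finset_sort.comp₂ Primrec₂.right)).of_eq
    fun _ _ => Finset.mem_sort _

theorem PrimrecRel.nat_finset_eq_toFinset :
    PrimrecRel fun (s : Finset ℕ) (l : List ℕ) => s = l.toFinset := by
  have hsub : PrimrecRel fun (s : Finset ℕ) (l : List ℕ) => ∀ x ∈ s.sort, x ∈ l :=
    (PrimrecRel.forall_mem_list PrimrecRel.list_mem).comp₂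
      (Primrec.nat_finset_sort.comp₂ Primrec₂.left) Primrec₂.right
  have hsup : PrimrecRel fun (s : Finset ℕ) (l : List ℕ) => ∀ x ∈ l, x ∈ s :=
    (PrimrecRel.forall_mem_list PrimrecRel.nat_finset_mem).comp₂ Primrec₂.right Primrec₂.left
  refine PrimrecPred.of_eq (hsub.and hsup) fun p => ?_
  simp only [Finset.mem_sort, Finset.ext_iff, List.mem_toFinset]
  grind

theorem Computable.nat_list_toFinset : Computable (List.toFinset : List ℕ → Finset ℕ) := by
  have hex : ∀ l : List ℕ, ∃ k, ofNat (Finset ℕ) k = l.toFinset :=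
    fun l => ⟨_, ofNat_encode l.toFinset⟩
  have hsearch : ComputablePred fun p : List ℕ × ℕ => ofNat (Finset ℕ) p.2 = p.1.toFinset :=
    (PrimrecRel.nat_finset_eq_toFinset.comp ((Primrec.ofNat _).comp Primrec.snd)
      Primrec.fst).computablePred
  exact ((Computable.ofNat _).comp (Computable.find hsearch hex)).of_eq
    fun l => Nat.find_spec (hex l)

theorem Computable.nat_finset_pair : Computable₂ fun i j : ℕ => ({i, j} : Finset ℕ) :=
  (Computable.nat_list_toFinset.comp (Computable.list_cons.comp Computable.fst
    (Computable.list_cons.comp Computable.snd (Computable.const [])))).of_eq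
    fun p => by simp

section REPred

variable {α : Type*} [Primcodable α]

theorem rePred_iff_exists_computable₂ {p : α → Prop} :
    REPred p ↔ ∃ t : α → ℕ → Bool, Computable₂ t ∧ ∀ a, p a ↔ ∃ s, t a s = true := by
  constructor
  · intro hp
    obtain ⟨c, hc⟩ := Code.exists_code.1 hp
    refine ⟨fun a s => (Code.evaln s c (encode a)).isSome, ?_, fun a => ?_⟩
    · exact (Primrec.option_isSome.comp (Code.primrec_evaln.comp
        (Primrec.pair (Primrec.pair Primrec.snd (Primrec.const c))
          (Primrec.encode.comp Primrec.fst)))).to_comp.to₂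
    · have hdom : p a ↔ (Code.eval c (encode a)).Dom := by
        simp [hc, encodek, Part.assert]
      simp only [hdom, Part.dom_iff_mem, Code.evaln_complete, Option.isSome_iff_exists,
        Option.mem_def]
      exact exists_comm
  · rintro ⟨t, ht, hpt⟩
    refine (Partrec.rfind ht.partrec₂).dom_re.of_eq fun a => ?_
    simp [hpt]

theorem REPred.comp {β : Type*} [Primcodable β] {p : β → Prop} (hp : REPred p) {g : α → β}
    (hg : Computable g) : REPred fun a => p (g a) :=
  Partrec.comp hp hg

theorem REPred.and {p q : α → Prop} (hp : REPred p) (hq : REPred q) :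
    REPred fun a => p a ∧ q a := by
  obtain ⟨t₁, ht₁, hpt₁⟩ := rePred_iff_exists_computable₂.1 hp
  obtain ⟨t₂, ht₂, hpt₂⟩ := rePred_iff_exists_computable₂.1 hq
  refine rePred_iff_exists_computable₂.2
    ⟨fun a s => t₁ a s.unpair.1 && t₂ a s.unpair.2, ?_, fun a => ?_⟩
  · have hs : Computable fun q : α × ℕ => q.2.unpair := Computable.unpair.comp Computable.snd
    exact (Primrec.and.to_comp.comp (ht₁.comp Computable.fst (Computable.fst.comp hs))
      (ht₂.comp Computable.fst (Computable.snd.comp hs))).to₂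
  · simp only [hpt₁, hpt₂, Bool.and_eq_true]
    constructor
    · rintro ⟨⟨s₁, h₁⟩, s₂, h₂⟩
      exact ⟨Nat.pair s₁ s₂, by simpa using h₁, by simpa using h₂⟩
    · rintro ⟨s, h₁, h₂⟩
      exact ⟨⟨_, h₁⟩, _, h₂⟩

theorem REPred.exists {β : Type*} [Primcodable β] {R : α → β → Prop}
    (hR : REPred fun p : α × β => R p.1 p.2) : REPred fun a => ∃ b, R a b := by
  obtain ⟨t, ht, hRt⟩ := rePred_iff_exists_computable₂.1 hR
  refine rePred_iff_exists_computable₂.2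
    ⟨fun a m => ((decode (α := β) m.unpair.1).map fun b => t (a, b) m.unpair.2).getD false,
      ?_, fun a => ?_⟩
  · have hm : Computable fun q : α × ℕ => q.2.unpair := Computable.unpair.comp Computable.snd
    have hdec : Computable fun q : α × ℕ => decode (α := β) q.2.unpair.1 :=
      Computable.decode.comp (Computable.fst.comp hm)
    have hstage : Computable₂ fun (q : α × ℕ) (b : β) => t (q.1, b) q.2.unpair.2 :=
      (ht.comp (Computable.pair (Computable.fst.comp Computable.fst) Computable.snd)
        (Computable.snd.comp (hm.comp Computable.fst))).to₂
    exact (Computable.option_getD (Computable.option_map hdec hstage)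
      (Computable.const false)).to₂
  · simp only [fun b => hRt (a, b)]
    constructor
    · rintro ⟨b, s, h⟩
      exact ⟨Nat.pair (encode b) s, by simpa [encodek] using h⟩
    · rintro ⟨m, h⟩
      cases hb : decode (α := β) m.unpair.1 with
      | none => simp [hb] at h
      | some b => exact ⟨b, m.unpair.2, by simpa [hb] using h⟩

end REPred

section Folner

variable {G : Type} [Group G] [DecidableEq G]

theorem IsFolner.exists_mem_inter_image_mul {n : ℕ} {D F : Finset G} (hF : IsFolner n D F)
    (hn : 3 ≤ n) {a b : G} (ha : a ∈ D) (hb : b ∈ D) :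
    ∃ u ∈ F, u ∈ F.image (a * ·) ∧ u ∈ F.image (b * ·) := by
  by_contra! hcon
  have hcover : F ⊆ (F \ F.image (a * ·)) ∪ (F \ F.image (b * ·)) := by
    intro u hu
    by_cases hua : u ∈ F.image (a * ·)
    · exact Finset.mem_union_right _ (Finset.mem_sdiff.2 ⟨hu, hcon u hu hua⟩)
    · exact Finset.mem_union_left _ (Finset.mem_sdiff.2 ⟨hu, hua⟩)
  have hcard : F.card ≤ (F \ F.image (a * ·)).card + (F \ F.image (b * ·)).card :=
    (Finset.card_le_card hcover).trans (Finset.card_union_le _ _)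
  have hpos : 0 < F.card := hF.1.card_pos
  have ha' := hF.2 a ha
  have hb' := hF.2 b hb
  nlinarith

theorem ne_iff_exists_mul_eq_mul_of_isFolner {ι : Type*} (ν : ι → G) {n : ℕ} (hn : 3 ≤ n)
    {a b : G} {F : Finset ι} (hF : IsFolner n {a, b} (F.image ν)) (hinj : Set.InjOn ν F) :
    a ≠ b ↔ ∃ x ∈ F, ∃ y ∈ F, x ≠ y ∧ a * ν x = b * ν y := by
  constructor
  · intro hab
    obtain ⟨u, -, hua, hub⟩ := hF.exists_mem_inter_image_mul hn
      (Finset.mem_insert_self a {b}) (Finset.mem_insert_of_mem (Finset.mem_singleton_self b))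
    simp only [Finset.image_image, Finset.mem_image, Function.comp_def] at hua hub
    obtain ⟨x, hx, rfl⟩ := hua
    obtain ⟨y, hy, hxy⟩ := hub
    refine ⟨x, hx, y, hy, ?_, hxy.symm⟩
    rintro rfl
    exact hab (mul_right_cancel hxy.symm)
  · rintro ⟨x, hx, y, hy, hxy, h⟩ rfl
    exact hxy (hinj hx hy (mul_left_cancel h))

theorem ne_iff_exists_mul_eq_mul_of_folner_pair (ν : ℕ → G) (mul : ℕ → ℕ → ℕ)
    (hmulν : ∀ i j, ν (mul i j) = ν i * ν j) {n : ℕ} (hn : 3 ≤ n) (f : Finset ℕ → Finset ℕ)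
    (hf : ∀ D : Finset ℕ, D.card = 2 →
      IsFolner n (D.image ν) ((f D).image ν) ∧ ((f D).image ν).card = (f D).card)
    (i j : ℕ) : ν i ≠ ν j ↔ i ≠ j ∧ ∃ x ∈ f {i, j}, ∃ y ∈ f {i, j},
      x ≠ y ∧ ν (mul i x) = ν (mul j y) := by
  by_cases hij : i = j
  · simp [hij]
  obtain ⟨hfol, hcard⟩ := hf {i, j} (Finset.card_pair hij)
  rw [Finset.image_insert, Finset.image_singleton] at hfol
  simp only [hmulν, ne_iff_exists_mul_eq_mul_of_isFolner ν hn hfol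
    (Finset.card_image_iff.1 hcard), ne_eq, hij, not_false_eq_true, true_and]

end Folner

theorem stmt2_general (G : Type) [Group G] [DecidableEq G] (ν : ℕ → G)
    (mul : ℕ → ℕ → ℕ)
    (hmulc : Computable₂ mul)
    (hmulν : ∀ i j, ν (mul i j) = ν i * ν j)
    (hce : REPred fun p : ℕ × ℕ => ν p.1 = ν p.2)
    -- for some n ≥ 3 there is a computable function producing Følner sets for two-element D
    (n : ℕ) (hn : 3 ≤ n)
    (f : Finset ℕ → Finset ℕ) (hfc : Computable f)
    (hf : ∀ D : Finset ℕ, D.card = 2 →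
      IsFolner n (D.image ν) ((f D).image ν) ∧ ((f D).image ν).card = (f D).card) :
    -- (G, ν) is computable
    ComputablePred fun p : ℕ × ℕ => ν p.1 = ν p.2 := by
  have hne (p : ℕ × ℕ) : ¬ν p.1 = ν p.2 ↔ ∃ q : ℕ × ℕ, p.1 ≠ p.2 ∧ q.1 ∈ f {p.1, p.2} ∧
      q.2 ∈ f {p.1, p.2} ∧ q.1 ≠ q.2 ∧ ν (mul p.1 q.1) = ν (mul p.2 q.2) := by
    simp only [ne_iff_exists_mul_eq_mul_of_folner_pair ν mul hmulν hn f hf, Prod.exists]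
    tauto
  have hdiff {g h : (ℕ × ℕ) × (ℕ × ℕ) → ℕ} (hg : Primrec g) (hh : Primrec h) :
      REPred fun r => g r ≠ h r :=
    (Primrec.eq.comp hg hh).not.computablePred.to_re
  have hmem {g : (ℕ × ℕ) × (ℕ × ℕ) → ℕ} (hg : Computable g) :
      REPred fun r => g r ∈ f {r.1.1, r.1.2} :=
    (PrimrecRel.nat_finset_mem.decide.to_comp.comp hg (hfc.comp
      (Computable.nat_finset_pair.comp (Computable.fst.comp Computable.fst)
        (Computable.snd.comp Computable.fst)))).computablePred.to_re
  have hmul : REPred fun r : (ℕ × ℕ) × (ℕ × ℕ) => ν (mul r.1.1 r.2.1) = ν (mul r.1.2 r.2.2) :=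
    hce.comp (Computable.pair
      (hmulc.comp (Computable.fst.comp Computable.fst) (Computable.fst.comp Computable.snd))
      (hmulc.comp (Computable.snd.comp Computable.fst) (Computable.snd.comp Computable.snd)))
  refine ComputablePred.computable_iff_re_compl_re'.2
    ⟨hce, REPred.of_eq (REPred.exists ?_) fun p => (hne p).symm⟩
  exact (hdiff (Primrec.fst.comp Primrec.fst) (Primrec.snd.comp Primrec.fst)).and
    ((hmem (Computable.fst.comp Computable.snd)).and
      ((hmem (Computable.snd.comp Computable.snd)).and
        ((hdiff (Primrec.fst.comp Primrec.snd) (Primrec.snd.comp Primrec.snd)).and hmul)))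

theorem stmt2 (G : Type) [Group G] [DecidableEq G] (ν : ℕ → G)
    (hsurj : Function.Surjective ν)
    (mul : ℕ → ℕ → ℕ) (inv : ℕ → ℕ)
    (hmulc : Computable₂ mul) (hinvc : Computable inv)
    (hmulν : ∀ i j, ν (mul i j) = ν i * ν j) (hinvν : ∀ i, ν (inv i) = (ν i)⁻¹)
    (hce : REPred fun p : ℕ × ℕ => ν p.1 = ν p.2)
    -- G is amenable
    (hamen : ∀ n : ℕ, 1 ≤ n → ∀ D : Finset G, ∃ F : Finset G, IsFolner n D F)
    -- for some n ≥ 3 there is a computable function producing Følner sets for two-element D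
    (n : ℕ) (hn : 3 ≤ n)
    (f : Finset ℕ → Finset ℕ) (hfc : Computable f)
    (hf : ∀ D : Finset ℕ, D.card = 2 →
      IsFolner n (D.image ν) ((f D).image ν) ∧ ((f D).image ν).card = (f D).card) :
    -- (G, ν) is computable
    ComputablePred fun p : ℕ × ℕ => ν p.1 = ν p.2 :=
  stmt2_general G ν mul hmulc hmulν hce n hn f hfc hf
end

section
/- For every total computable function f : ℕ → ℕ there exists a computable function x₀ : ℤ → {0,1} such that, setting m_j(x₀) = (∑_{i=−j}^{j} x₀(i)) / (2j+1) for j ∈ ℕ: (a) m_j(x₀) → 0 as j → ∞; and (b) for every integer k ≥ 1 there exists j > f(k) with m_j(x₀) ≥ 1/k. -/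
/-!
The sequence is the symmetric indicator `i ↦ [|i| ∈ S]` of a union `S` of blocks
`[k sₖ, (k+1) sₖ]`, where the scales `sₖ` grow so fast that `sₖ > f (k+1)` and every block is
longer than everything before it. At the end `j` of block `k` the block alone fills a fraction
`≥ 1/(k+1)` of `[-j, j]`. Conversely `mⱼ ≤ #(S ∩ [0, j]) / (j+1)`, and this one-sided density
decreases across the gaps and increases across the blocks, so past the end of block `k` it is
bounded by its values at the later block ends, which are `≤ 2/(k+1)`. The scales are defined by
primitive recursion from `f`, and deciding `n ∈ S` only involves the blocks with index `≤ n`, so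
the sequence is computable.
-/

open Filter Topology

/-- The mean over the Følner set `F_j = {-j, …, j}` of `ℤ` applied to `x : ℤ → {0,1}`:
`m_j(x) = (∑_{i=-j}^{j} x(i)) / (2j+1)`. -/
noncomputable def folnerMean (x : ℤ → Bool) (j : ℕ) : ℝ :=
  (∑ i ∈ Finset.Icc (-(j : ℤ)) (j : ℤ), (if x i then (1 : ℝ) else 0)) / (2 * j + 1)

open Finset Nat

theorem Finset.sum_Icc_neg_natAbs {M : Type*} [AddCommMonoid M] (h : ℕ → M) (j : ℕ) :
    ∑ i ∈ Icc (-(j : ℤ)) j, h i.natAbs + h 0 = 2 • ∑ n ∈ range (j + 1), h n := by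
  induction j with
  | zero => simp [two_nsmul]
  | succ j ih =>
    have hIcc : Icc (-((j + 1 : ℕ) : ℤ)) (j + 1 : ℕ) =
        insert (-((j : ℤ) + 1)) (insert ((j : ℤ) + 1) (Icc (-(j : ℤ)) j)) := by
      ext i; simp only [mem_Icc, mem_insert]; omega
    rw [hIcc, sum_insert (by simp only [mem_insert, mem_Icc]; omega),
      sum_insert (by simp only [mem_Icc]; omega), sum_range_succ, nsmul_add, ← ih,
      show (-((j : ℤ) + 1)).natAbs = j + 1 by omega, show ((j : ℤ) + 1).natAbs = j + 1 by omega]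
    abel

theorem folnerMean_nonneg (x : ℤ → Bool) (j : ℕ) : 0 ≤ folnerMean x j := by
  unfold folnerMean; positivity

theorem folnerMean_natAbs (p : ℕ → Prop) [DecidablePred p] (h0 : p 0) (j : ℕ) :
    folnerMean (fun i => decide (p i.natAbs)) j = (2 * count p (j + 1) - 1) / (2 * j + 1) := by
  have hsum := sum_Icc_neg_natAbs (fun n => if p n then (1 : ℝ) else 0) j
  have hcount : ∑ n ∈ range (j + 1), (if p n then (1 : ℝ) else 0) = count p (j + 1) := by
    rw [sum_boole, count_eq_card_filter_range]
  simp only [h0, if_true, nsmul_eq_mul, Nat.cast_ofNat, hcount] at hsum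
  simp only [folnerMean, decide_eq_true_eq]
  congr 1
  linarith

namespace Nat

variable {p : ℕ → Prop} [DecidablePred p] {m n : ℕ}

theorem count_eq_of_forall_not_of_le (hmn : m ≤ n) (h : ∀ i, m ≤ i → i < n → ¬p i) :
    count p n = count p m := by
  obtain ⟨d, rfl⟩ := exists_add_of_le hmn
  rw [count_add, count_of_forall_not fun i hi => h (m + i) (by omega) (by omega), add_zero]

theorem count_eq_add_of_forall_of_le (hmn : m ≤ n) (h : ∀ i, m ≤ i → i < n → p i) :
    count p n = count p m + (n - m) := by
  obtain ⟨d, rfl⟩ := exists_add_of_le hmn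
  rw [count_add, count_of_forall fun i hi => h (m + i) (by omega) (by omega)]
  omega

end Nat

noncomputable def partialDensity (p : ℕ → Prop) [DecidablePred p] (n : ℕ) : ℝ := count p n / n

section partialDensity

variable {p : ℕ → Prop} [DecidablePred p] {m n : ℕ}

theorem partialDensity_le_of_forall (hmn : m ≤ n) (h : ∀ i, m ≤ i → i < n → p i) :
    partialDensity p m ≤ partialDensity p n := by
  rcases m.eq_zero_or_pos with rfl | hm
  · simp only [partialDensity, count_zero, CharP.cast_eq_zero, zero_div]; positivity
  have hc : (count p m : ℝ) ≤ m := by exact_mod_cast count_le p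
  have hmn' : (m : ℝ) ≤ n := by exact_mod_cast hmn
  have hn : (0 : ℝ) < n := by exact_mod_cast hm.trans_le hmn
  rw [partialDensity, partialDensity, count_eq_add_of_forall_of_le hmn h,
    div_le_div_iff₀ (by positivity) hn]
  push_cast [hmn]
  nlinarith

theorem partialDensity_le_of_forall_not (hmn : m ≤ n) (h : ∀ i, m ≤ i → i < n → ¬p i) :
    partialDensity p n ≤ partialDensity p m := by
  rw [partialDensity, partialDensity, count_eq_of_forall_not_of_le hmn h]
  rcases m.eq_zero_or_pos with rfl | hm
  · simp
  exact div_le_div_of_nonneg_left (by positivity) (by positivity) (by exact_mod_cast hmn)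

theorem folnerMean_natAbs_le_partialDensity (h0 : p 0) (j : ℕ) :
    folnerMean (fun i => decide (p i.natAbs)) j ≤ partialDensity p (j + 1) := by
  have hc : (count p (j + 1) : ℝ) ≤ j + 1 := by exact_mod_cast count_le p
  rw [folnerMean_natAbs p h0, partialDensity, div_le_div_iff₀ (by positivity) (by positivity)]
  push_cast
  nlinarith

end partialDensity

theorem tendsto_nhds_zero_of_eventually_le_div {u : ℕ → ℝ} (hu : ∀ j, 0 ≤ u j) (c : ℝ)
    (h : ∀ k : ℕ, ∀ᶠ j in atTop, u j ≤ c / (k + 1)) : Tendsto u atTop (𝓝 0) := by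
  refine tendsto_order.2 ⟨fun a ha => .of_forall fun j => ha.trans_le (hu j), fun a ha => ?_⟩
  obtain ⟨k, hk⟩ := exists_nat_gt (c / a)
  have hck : c / (k + 1) < a := by
    rw [div_lt_iff₀ (by positivity)]
    rw [div_lt_iff₀ ha] at hk
    linarith
  exact (h k).mono fun j hj => hj.trans_lt hck

theorem Computable.decide_exists_lt {α : Type*} [Primcodable α] {p : α → ℕ → Bool}
    (hp : Computable₂ p) {b : α → ℕ} (hb : Computable b) :
    Computable fun a => decide (∃ k < b a, p a k = true) := by
  have hrec : Computable fun a =>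
      Nat.rec (motive := fun _ => Bool) false (fun k acc => acc || p a k) (b a) :=
    Computable.nat_rec hb (Computable.const false)
      ((Primrec.or.to_comp.comp (Computable.snd.comp Computable.snd)
        (hp.comp Computable.fst (Computable.fst.comp Computable.snd))).to₂)
  refine hrec.of_eq fun a => ?_
  induction b a with
  | zero => simp
  | succ n ih =>
    change (_ || p a n) = _
    simp only [ih, Nat.exists_lt_succ_right, Bool.decide_or, Bool.decide_eq_true]

-- `ℤ` is encoded by `n ↦ 2n` and `-(n+1) ↦ 2n+1`.
theorem Primrec.int_natAbs : Primrec Int.natAbs := by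
  refine (Primrec.nat_div.comp (Primrec.succ.comp Primrec.encode) (Primrec.const 2)).of_eq ?_
  rintro (n | n)
  · show (2 * n + 1) / 2 = n; omega
  · show (2 * n + 1 + 1) / 2 = n + 1; omega

namespace FolnerBlocks

variable (f : ℕ → ℕ)

-- `f (k + 1) < scale f k` puts the end of block `k` beyond `f (k + 1)`, and
-- `scale f (k + 1) ≥ blockEnd f k + 2` makes block `k + 1` longer than everything before it.
def scale : ℕ → ℕ
  | 0 => f 1 + 1
  | k + 1 => (k + 1) * scale k + f (k + 2) + 2

def blockStart (k : ℕ) : ℕ := k * scale f k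

def blockEnd (k : ℕ) : ℕ := (k + 1) * scale f k

-- The bound `k < n + 1` is automatic (`k ≤ blockStart f k`); it makes membership computable.
def InBlocks (n : ℕ) : Prop := ∃ k < n + 1, blockStart f k ≤ n ∧ n ≤ blockEnd f k

instance : DecidablePred (InBlocks f) := fun n =>
  inferInstanceAs (Decidable (∃ k < n + 1, blockStart f k ≤ n ∧ n ≤ blockEnd f k))

def seq (i : ℤ) : Bool := decide (InBlocks f i.natAbs)

variable {f}

theorem one_le_scale (k : ℕ) : 1 ≤ scale f k := by
  cases k <;> simp only [scale] <;> omega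

theorem f_lt_scale (k : ℕ) : f (k + 1) < scale f k := by
  cases k with
  | zero => simp [scale]
  | succ k => show f (k + 2) < _; simp only [scale]; omega

theorem blockEnd_add_two_le_scale_succ (k : ℕ) : blockEnd f k + 2 ≤ scale f (k + 1) := by
  simp only [blockEnd, scale]; omega

theorem scale_mono : Monotone (scale f) :=
  monotone_nat_of_le_succ fun k => by
    have := blockEnd_add_two_le_scale_succ (f := f) k
    have : scale f k ≤ blockEnd f k := Nat.le_mul_of_pos_left _ k.succ_pos
    omega

theorem blockEnd_eq (k : ℕ) : blockEnd f k = blockStart f k + scale f k := Nat.succ_mul _ _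

theorem blockEnd_add_two_le_blockStart_succ (k : ℕ) : blockEnd f k + 2 ≤ blockStart f (k + 1) :=
  (blockEnd_add_two_le_scale_succ k).trans (Nat.le_mul_of_pos_left _ k.succ_pos)

theorem blockStart_mono : Monotone (blockStart f) := fun _ _ h => Nat.mul_le_mul h (scale_mono h)

theorem blockEnd_mono : Monotone (blockEnd f) :=
  fun _ _ h => Nat.mul_le_mul (Nat.succ_le_succ h) (scale_mono h)

theorem le_blockEnd (k : ℕ) : k ≤ blockEnd f k := by
  have := one_le_scale (f := f) k
  simp only [blockEnd]; nlinarith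

theorem f_lt_blockEnd (k : ℕ) : f (k + 1) < blockEnd f k :=
  (f_lt_scale k).trans_le (Nat.le_mul_of_pos_left _ k.succ_pos)

theorem inBlocks_iff {n : ℕ} : InBlocks f n ↔ ∃ k, blockStart f k ≤ n ∧ n ≤ blockEnd f k := by
  refine ⟨fun ⟨k, _, h⟩ => ⟨k, h⟩, fun ⟨k, h⟩ => ⟨k, ?_, h⟩⟩
  have : k ≤ blockStart f k := Nat.le_mul_of_pos_right _ (one_le_scale k)
  omega

theorem inBlocks_of_mem {k n : ℕ} (h1 : blockStart f k ≤ n) (h2 : n ≤ blockEnd f k) :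
    InBlocks f n :=
  inBlocks_iff.2 ⟨k, h1, h2⟩

theorem inBlocks_zero : InBlocks f 0 :=
  inBlocks_of_mem (k := 0) (by simp [blockStart]) (Nat.zero_le _)

theorem not_inBlocks {k n : ℕ} (h1 : blockEnd f k < n) (h2 : n < blockStart f (k + 1)) :
    ¬InBlocks f n := by
  rintro ⟨m, -, hm1, hm2⟩
  rcases le_or_gt m k with hmk | hkm
  · have := blockEnd_mono (f := f) hmk; omega
  · have := blockStart_mono (f := f) (show k + 1 ≤ m from hkm); omega

theorem count_blockStart_lt_scale (k : ℕ) : count (InBlocks f) (blockStart f k) < scale f k := by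
  cases k with
  | zero => simp only [blockStart, zero_mul, count_zero]; exact one_le_scale 0
  | succ k =>
    have := blockEnd_add_two_le_blockStart_succ (f := f) k
    rw [count_eq_of_forall_not_of_le (p := InBlocks f) (m := blockEnd f k + 1) (by omega)
      fun i h1 h2 => not_inBlocks h1 h2]
    have := blockEnd_add_two_le_scale_succ (f := f) k
    have := count_le (InBlocks f) (n := blockEnd f k + 1)
    omega

theorem count_blockEnd_succ (k : ℕ) : count (InBlocks f) (blockEnd f k + 1) =
    count (InBlocks f) (blockStart f k) + (scale f k + 1) := by
  have := blockEnd_eq (f := f) k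
  rw [count_eq_add_of_forall_of_le (p := InBlocks f) (m := blockStart f k) (by omega)
    fun i h1 h2 => inBlocks_of_mem h1 (by omega)]
  omega

theorem partialDensity_blockEnd_succ_le (k : ℕ) :
    partialDensity (InBlocks f) (blockEnd f k + 1) ≤ 2 / (k + 1) := by
  have hcount : count (InBlocks f) (blockEnd f k + 1) ≤ 2 * scale f k := by
    have := count_blockStart_lt_scale (f := f) k
    rw [count_blockEnd_succ]; omega
  have hc : (count (InBlocks f) (blockEnd f k + 1) : ℝ) ≤ 2 * scale f k := by
    exact_mod_cast hcount
  have hE : (blockEnd f k : ℝ) = (k + 1) * scale f k := by simp [blockEnd]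
  rw [partialDensity, div_le_div_iff₀ (by positivity) (by positivity)]
  push_cast
  rw [hE]
  nlinarith

theorem partialDensity_le_of_mem_Icc {k n : ℕ} (h1 : blockEnd f k + 1 ≤ n)
    (h2 : n ≤ blockEnd f (k + 1) + 1) : partialDensity (InBlocks f) n ≤ 2 / (k + 1) := by
  rcases le_total n (blockStart f (k + 1)) with h | h
  · exact (partialDensity_le_of_forall_not h1 fun i hi1 hi2 => not_inBlocks hi1 (by omega)).trans
      (partialDensity_blockEnd_succ_le k)
  · refine (partialDensity_le_of_forall h2 fun i hi1 hi2 =>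
      inBlocks_of_mem (k := k + 1) (by omega) (by omega)).trans ?_
    refine (partialDensity_blockEnd_succ_le (k + 1)).trans ?_
    gcongr
    linarith

theorem partialDensity_le_of_blockEnd_lt {k n : ℕ} (h : blockEnd f k < n) :
    partialDensity (InBlocks f) n ≤ 2 / (k + 1) := by
  suffices ∀ m n, blockEnd f k + 1 ≤ n → n ≤ blockEnd f (k + m) + 1 →
      partialDensity (InBlocks f) n ≤ 2 / (k + 1) by
    have hn := le_blockEnd (f := f) (k + n)
    exact this n n h (by omega)
  intro m
  induction m with
  | zero =>
    exact fun n h1 h2 =>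
      partialDensity_le_of_mem_Icc h1 (h2.trans (by gcongr; exact blockEnd_mono k.le_succ))
  | succ m ih =>
    intro n h1 h2
    rcases le_total n (blockEnd f (k + m) + 1) with h | h
    · exact ih n h1 h
    · refine (partialDensity_le_of_mem_Icc h h2).trans ?_
      gcongr
      simp

theorem folnerMean_seq_le {k j : ℕ} (h : blockEnd f k ≤ j) :
    folnerMean (seq f) j ≤ 2 / (k + 1) :=
  (folnerMean_natAbs_le_partialDensity inBlocks_zero j).trans
    (partialDensity_le_of_blockEnd_lt (by omega))

theorem tendsto_folnerMean_seq : Tendsto (folnerMean (seq f)) atTop (𝓝 0) :=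
  tendsto_nhds_zero_of_eventually_le_div (folnerMean_nonneg _) 2 fun k =>
    eventually_atTop.2 ⟨blockEnd f k, fun _ => folnerMean_seq_le⟩

theorem inv_le_folnerMean_seq_blockEnd (k : ℕ) :
    1 / (k + 1 : ℝ) ≤ folnerMean (seq f) (blockEnd f k) := by
  have hc : (scale f k : ℝ) + 1 ≤ count (InBlocks f) (blockEnd f k + 1) := by
    rw [count_blockEnd_succ]
    push_cast
    linarith [(count (InBlocks f) (blockStart f k)).cast_nonneg (α := ℝ)]
  have hE : (blockEnd f k : ℝ) = (k + 1) * scale f k := by simp [blockEnd]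
  unfold seq
  rw [folnerMean_natAbs _ inBlocks_zero, div_le_div_iff₀ (by positivity) (by positivity), hE]
  nlinarith

theorem computable_scale (hf : Computable f) : Computable (scale f) := by
  have hstep : Computable₂ fun (_ : ℕ) (p : ℕ × ℕ) => (p.1 + 1) * p.2 + f (p.1 + 2) + 2 := by
    have h1 : Computable fun q : ℕ × ℕ × ℕ => q.2.1 := Computable.fst.comp Computable.snd
    have h2 : Computable fun q : ℕ × ℕ × ℕ => q.2.2 := Computable.snd.comp Computable.snd
    have h : Computable fun q : ℕ × ℕ × ℕ => (q.2.1 + 1) * q.2.2 + f (q.2.1 + 2) + 2 :=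
      Primrec.nat_add.to_comp.comp
        (Primrec.nat_add.to_comp.comp
          (Primrec.nat_mul.to_comp.comp (Computable.succ.comp h1) h2)
          (hf.comp (Computable.succ.comp (Computable.succ.comp h1))))
        (Computable.const 2)
    exact h.to₂
  refine (Computable.nat_rec Computable.id (Computable.const (f 1 + 1)) hstep).of_eq fun k => ?_
  induction k with
  | zero => rfl
  | succ k ih => simp only [scale, ← ih]; rfl

theorem computable_seq (hf : Computable f) : Computable (seq f) := by
  have hS := computable_scale hf
  have hblock : Computable₂ fun (n k : ℕ) =>
      decide (blockStart f k ≤ n) && decide (n ≤ blockEnd f k) :=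
    Computable.to₂ (Primrec.and.to_comp.comp
      (Primrec.nat_le.decide.to_comp.comp
        (Primrec.nat_mul.to_comp.comp Computable.snd (hS.comp Computable.snd)) Computable.fst)
      (Primrec.nat_le.decide.to_comp.comp Computable.fst
        (Primrec.nat_mul.to_comp.comp (Computable.succ.comp Computable.snd)
          (hS.comp Computable.snd))))
  have hin : Computable fun n => decide (InBlocks f n) :=
    (Computable.decide_exists_lt hblock Computable.succ).of_eq fun n => by simp [InBlocks]
  exact hin.comp Primrec.int_natAbs.to_comp

end FolnerBlocks

theorem stmt7 (f : ℕ → ℕ) (hf : Computable f) :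
    ∃ x₀ : ℤ → Bool, Computable x₀ ∧
      Tendsto (fun j : ℕ => folnerMean x₀ j) atTop (nhds 0) ∧
      ∀ k : ℕ, 1 ≤ k → ∃ j : ℕ, f k < j ∧ (1 / k : ℝ) ≤ folnerMean x₀ j := by
  refine ⟨FolnerBlocks.seq f, FolnerBlocks.computable_seq hf,
    FolnerBlocks.tendsto_folnerMean_seq, fun k hk => ?_⟩
  obtain ⟨k, rfl⟩ := Nat.exists_eq_add_of_le' hk
  exact ⟨FolnerBlocks.blockEnd f k, FolnerBlocks.f_lt_blockEnd k,
    by simpa using FolnerBlocks.inv_le_folnerMean_seq_blockEnd k⟩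
end

section
/- Let G be a group, n ≥ 1 an integer, D ⊆ G a finite nonempty set, and h : G → ℝ≥0 a nonzero finitely supported function such that for every x ∈ D, ∑_{a∈G} |h(a) − h(x⁻¹a)| < (1/n)·∑_{a∈G} h(a). Then there exists a nonempty finite set F ⊆ supp(h) such that for every x ∈ D, |F \ xF| < (|D|/(2n))·|F|. -/
/-!
A discrete layer-cake argument. If `m` is the least positive value of `h` and `S = supp h`, then
`h = m • 1_S + (h - m)⁺`, and since `min (·) m` and `(· - m)⁺` are both monotone, the `ℓ¹`-distances
between `h` and its translates split as the sum of those of the two pieces, as does `∑ h`. So either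
`1_S` already satisfies the averaged Reiter inequality, or `(h - m)⁺`, whose support is strictly
smaller, does, and we induct. For an indicator, `∑ₐ |1_F a - 1_F (x⁻¹ a)| = |F ∆ xF| = 2 |F \ xF|`.
-/

open Function Finset

lemma abs_sub_eq_abs_min_sub_min_add_abs_max_sub_max (u v m : ℝ) :
    |u - v| = |min u m - min v m| + |max (u - m) 0 - max (v - m) 0| := by
  grind

lemma min_add_max_sub_eq (u m : ℝ) : min u m + max (u - m) 0 = u := by
  grind

section

variable {α : Type*}

lemma finsum_indicator_one_finset (s : Finset α) :
    ∑ᶠ a, (s : Set α).indicator (1 : α → ℝ) a = s.card := by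
  rw [← finsum_mem_def, finsum_mem_coe_finset]
  simp

lemma finsum_abs_indicator_sub_indicator [DecidableEq α] (s t : Finset α) :
    ∑ᶠ a, |(s : Set α).indicator (1 : α → ℝ) a - (t : Set α).indicator 1 a| =
      (s \ t).card + (t \ s).card := by
  have hpoint : ∀ a, |(s : Set α).indicator (1 : α → ℝ) a - (t : Set α).indicator 1 a| =
      ((s \ t : Finset α) : Set α).indicator 1 a + ((t \ s : Finset α) : Set α).indicator 1 a := by
    intro a
    by_cases has : a ∈ s <;> by_cases hat : a ∈ t <;> simp [has, hat]
  simp only [hpoint]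
  rw [finsum_add_distrib ((s \ t).finite_toSet.subset Set.support_indicator_subset)
    ((t \ s).finite_toSet.subset Set.support_indicator_subset), finsum_indicator_one_finset,
    finsum_indicator_one_finset]

section Layer

variable {f : α → ℝ} {T : Finset α} {m : ℝ}

lemma min_eq_mul_indicator (hT : (T : Set α) = support f) (hm : 0 ≤ m)
    (hmin : ∀ a ∈ T, m ≤ f a) :
    (fun a => min (f a) m) = fun a => m * (T : Set α).indicator 1 a := by
  ext a
  by_cases ha : a ∈ T
  · simp [ha, hmin a ha]
  · have hfa : f a = 0 := notMem_support.mp (by rwa [← hT, Finset.mem_coe])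
    simp [ha, hfa, hm]

lemma hasFiniteSupport_max_sub (hT : (T : Set α) = support f) (hm : 0 ≤ m) :
    HasFiniteSupport fun a => max (f a - m) 0 :=
  HasFiniteSupport.fun_comp (g := fun u => max (u - m) 0) (T.finite_toSet.subset hT.ge)
    (by simp [hm])

lemma finsum_eq_mul_card_add (hT : (T : Set α) = support f) (hm : 0 ≤ m)
    (hmin : ∀ a ∈ T, m ≤ f a) :
    ∑ᶠ a, f a = m * T.card + ∑ᶠ a, max (f a - m) 0 := by
  rw [← finsum_indicator_one_finset, mul_finsum, ← finsum_add_distrib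
    (T.finite_toSet.subset ((support_mul_subset_right _ _).trans Set.support_indicator_subset))
    (hasFiniteSupport_max_sub hT hm)]
  refine finsum_congr fun a => ?_
  rw [← congrFun (min_eq_mul_indicator hT hm hmin) a, min_add_max_sub_eq]

lemma support_max_sub_subset_erase [DecidableEq α] (hT : (T : Set α) = support f) (hm : 0 ≤ m)
    {a₀ : α} (ha₀ : f a₀ = m) :
    support (fun a => max (f a - m) 0) ⊆ T.erase a₀ := by
  intro a ha
  have hgt : m < f a := by
    by_contra hle
    exact ha (max_eq_right (by linarith [not_lt.mp hle]))
  rw [Finset.coe_erase, hT]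
  exact ⟨(hm.trans_lt hgt).ne', fun h => hgt.ne (by rw [h, ha₀])⟩

end Layer

end

variable {G : Type*} [Group G]

lemma Function.HasFiniteSupport.abs_sub_translate {f : G → ℝ} (hf : HasFiniteSupport f) (x : G) :
    HasFiniteSupport fun a => |f a - f (x⁻¹ * a)| :=
  (hf.fun_sub (hf.fun_comp_of_injective (mul_right_injective x⁻¹))).fun_comp abs_zero

noncomputable def translationDefect (D : Finset G) (f : G → ℝ) : ℝ :=
  ∑ x ∈ D, ∑ᶠ a, |f a - f (x⁻¹ * a)|

variable (D : Finset G)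

lemma translationDefect_const_mul (f : G → ℝ) {c : ℝ} (hc : 0 ≤ c) :
    translationDefect D (fun a => c * f a) = c * translationDefect D f := by
  simp only [translationDefect, Finset.mul_sum, mul_finsum, ← mul_sub, abs_mul, abs_of_nonneg hc]

lemma translationDefect_indicator [DecidableEq G] (F : Finset G) :
    translationDefect D ((F : Set G).indicator 1) =
      ∑ x ∈ D, 2 * ((F \ F.image (x * ·)).card : ℝ) := by
  refine Finset.sum_congr rfl fun x _ => ?_
  have htranslate : ∀ a, (F : Set G).indicator (1 : G → ℝ) (x⁻¹ * a) =
      ((F.image (x * ·) : Finset G) : Set G).indicator 1 a := by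
    intro a
    rw [Finset.coe_image, Set.image_mul_left]
    rfl
  simp only [htranslate]
  rw [finsum_abs_indicator_sub_indicator, ← Finset.card_sdiff_comm
    (Finset.card_image_of_injective F (mul_right_injective x)).symm]
  ring

variable {D}

lemma translationDefect_eq_add {f g k : G → ℝ} (hg : HasFiniteSupport g) (hk : HasFiniteSupport k)
    (hfgk : ∀ a b, |f a - f b| = |g a - g b| + |k a - k b|) :
    translationDefect D f = translationDefect D g + translationDefect D k := by
  simp only [translationDefect, hfgk, ← Finset.sum_add_distrib]
  exact Finset.sum_congr rfl fun x _ =>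
    finsum_add_distrib (hg.abs_sub_translate x) (hk.abs_sub_translate x)

lemma translationDefect_eq_mul_indicator_add {f : G → ℝ} {T : Finset G} {m : ℝ}
    (hT : (T : Set G) = support f) (hm : 0 ≤ m) (hmin : ∀ a ∈ T, m ≤ f a) :
    translationDefect D f = m * translationDefect D ((T : Set G).indicator 1) +
      translationDefect D fun a => max (f a - m) 0 := by
  rw [← translationDefect_const_mul _ _ hm, ← min_eq_mul_indicator hT hm hmin]
  refine translationDefect_eq_add ?_ (hasFiniteSupport_max_sub hT hm) fun a b =>
    abs_sub_eq_abs_min_sub_min_add_abs_max_sub_max (f a) (f b) m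
  exact HasFiniteSupport.fun_comp (g := fun u => min u m) (T.finite_toSet.subset hT.ge)
    (by simp [hm])

theorem exists_indicator_translationDefect_lt {f : G → ℝ} (hfin : HasFiniteSupport f)
    (hf : ∀ a, 0 ≤ f a) {c : ℝ} (hD : translationDefect D f < c * ∑ᶠ a, f a) :
    ∃ F : Finset G, F.Nonempty ∧ ↑F ⊆ support f ∧
      translationDefect D ((F : Set G).indicator 1) < c * F.card := by
  classical
  obtain ⟨S, hS⟩ : ∃ S : Finset G, support f ⊆ S := ⟨hfin.toFinset, hfin.coe_toFinset.ge⟩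
  clear hfin
  induction S using Finset.strongInduction generalizing f with
  | H S ih =>
  set T := S.filter (f · ≠ 0)
  have hT : (T : Set G) = support f := by
    ext a
    simpa [T] using fun h => hS h
  have hTne : T.Nonempty := by
    by_contra hempty
    have hzero : f = 0 := support_eq_empty_iff.mp <| by
      rw [← hT, Finset.not_nonempty_iff_eq_empty.mp hempty, Finset.coe_empty]
    simp [hzero, translationDefect] at hD
  obtain ⟨a₀, ha₀, hmin⟩ := T.exists_min_image f hTne
  have hm : 0 ≤ f a₀ := hf a₀
  by_cases hbase : translationDefect D ((T : Set G).indicator 1) < c * T.card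
  · exact ⟨T, hTne, hT.le, hbase⟩
  have hupper : translationDefect D (fun a => max (f a - f a₀) 0) <
      c * ∑ᶠ a, max (f a - f a₀) 0 := by
    rw [translationDefect_eq_mul_indicator_add hT hm hmin,
      finsum_eq_mul_card_add hT hm hmin] at hD
    nlinarith [mul_le_mul_of_nonneg_left (not_lt.mp hbase) hm]
  have hupper_supp := support_max_sub_subset_erase hT hm rfl
  obtain ⟨F, hFne, hFsub, hF⟩ := ih (T.erase a₀)
    ((T.erase_ssubset ha₀).trans_subset (filter_subset _ _)) (fun a => le_max_right _ _) hupper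
    hupper_supp
  refine ⟨F, hFne, hFsub.trans (hupper_supp.trans ?_), hF⟩
  exact hT ▸ Finset.coe_subset.mpr (T.erase_subset a₀)

theorem stmt13_general (G : Type) [Group G] [DecidableEq G] (n : ℕ)
    (D : Finset G) (hDne : D.Nonempty)
    (h : G → ℝ) (hsupp : {a : G | h a ≠ 0}.Finite) (hpos : ∀ a, 0 ≤ h a)
    -- h is (1/n)-invariant in the Reiter sense with respect to D
    (hReiter : ∀ x ∈ D, (∑ᶠ a : G, |h a - h (x⁻¹ * a)|) < (1 / n : ℝ) * ∑ᶠ a : G, h a) :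
    ∃ F : Finset G, F.Nonempty ∧ ↑F ⊆ {a : G | h a ≠ 0} ∧
      ∀ x ∈ D, ((F \ F.image (x * ·)).card : ℝ) < ((D.card : ℝ) / (2 * n)) * F.card := by
  have hD : translationDefect D h < (D.card / n : ℝ) * ∑ᶠ a, h a :=
    calc translationDefect D h < ∑ _x ∈ D, (1 / n : ℝ) * ∑ᶠ a, h a :=
          Finset.sum_lt_sum_of_nonempty hDne hReiter
      _ = (D.card / n : ℝ) * ∑ᶠ a, h a := by
          rw [Finset.sum_const, nsmul_eq_mul]
          ring
  obtain ⟨F, hFne, hFh, hF⟩ := exists_indicator_translationDefect_lt hsupp hpos hD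
  refine ⟨F, hFne, hFh, fun x hx => ?_⟩
  rw [translationDefect_indicator] at hF
  have hx_le := Finset.single_le_sum (f := fun y => 2 * ((F \ F.image (y * ·)).card : ℝ))
    (fun _ _ => by positivity) hx
  calc ((F \ F.image (x * ·)).card : ℝ) < (D.card / n : ℝ) * F.card / 2 := by
        linarith
    _ = (D.card / (2 * n) : ℝ) * F.card := by ring

theorem stmt13 (G : Type) [Group G] [DecidableEq G] (n : ℕ) (hn : 1 ≤ n)
    (D : Finset G) (hDne : D.Nonempty)
    (h : G → ℝ) (hsupp : {a : G | h a ≠ 0}.Finite) (hpos : ∀ a, 0 ≤ h a) (hne : h ≠ 0)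
    -- h is (1/n)-invariant in the Reiter sense with respect to D
    (hReiter : ∀ x ∈ D, (∑ᶠ a : G, |h a - h (x⁻¹ * a)|) < (1 / n : ℝ) * ∑ᶠ a : G, h a) :
    ∃ F : Finset G, F.Nonempty ∧ ↑F ⊆ {a : G | h a ≠ 0} ∧
      ∀ x ∈ D, ((F \ F.image (x * ·)).card : ℝ) < ((D.card : ℝ) / (2 * n)) * F.card :=
  stmt13_general G n D hDne h hsupp hpos hReiter
end
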